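/- Let P_j and Q_j be probability mass functions on a finite alphabet X with total variation distance V(P_j, Q_j) ≤ ε_j, and let P̄_j(x) = (Q_j(x)+ε_j)/(1+|X|ε_j). Then for any sequence x⃗ ∈ X^n with empirical type P_{x⃗}, the i.i.d. probability satisfies P_j(x⃗) = Π_i P_j(x_i) ≤ 2^{-n(H(P_{x⃗}) + D(P_{x⃗}‖P̄_j) - log(1+|X|ε_j))}, where H is Shannon entropy and D is KL divergence, both in base 2. -/

import Mathlib

open Finset

/-- Empirical type of a sequence. -/
noncomputable def typeOf {α : Type*} [Fintype α] [DecidableEq α] {n : ℕ} (xv : Fin n → α) :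
    α → ℝ :=
  fun a => ((Finset.univ.filter fun i => xv i = a).card : ℝ) / n

/-- Base-2 KL divergence. -/
noncomputable def KL {α : Type*} [Fintype α] (P Q : α → ℝ) : ℝ :=
  ∑ x, P x * Real.logb 2 (P x / Q x)

/-- Base-2 Shannon entropy. -/
noncomputable def Hent {α : Type*} [Fintype α] (P : α → ℝ) : ℝ :=
  -∑ x, P x * Real.logb 2 (P x)

theorem stmt5 {α : Type*} [Fintype α] [DecidableEq α] {n : ℕ} (hn : 0 < n)
    (P Q : α → ℝ)
    (hP0 : ∀ x, 0 ≤ P x) (hP1 : ∑ x, P x = 1)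
    (hQ0 : ∀ x, 0 ≤ Q x) (hQ1 : ∑ x, Q x = 1)
    (ε : ℝ) (hε : 0 < ε)
    (hV : (1/2) * ∑ x, |P x - Q x| ≤ ε)
    (Pbar : α → ℝ)
    (hPbar : ∀ x, Pbar x = (Q x + ε) / (1 + (Fintype.card α : ℝ) * ε))
    (xv : Fin n → α) :
    ∏ i, P (xv i) ≤
      (2:ℝ) ^ (-(n:ℝ) * (Hent (typeOf xv) + KL (typeOf xv) Pbar -
        Real.logb 2 (1 + (Fintype.card α : ℝ) * ε))) := by
  classical
  set s : ℝ := 1 + (Fintype.card α : ℝ) * ε with hs_def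
  have hs : 0 < s := by
    have : (0:ℝ) ≤ (Fintype.card α : ℝ) * ε := by positivity
    simp only [hs_def]; linarith
  set N : α → ℕ := fun a => (Finset.univ.filter fun i => xv i = a).card with hN_def
  have hNsum : ∑ a, N a = n := by
    rw [← Finset.card_fin n]
    exact (Finset.card_eq_sum_card_fiberwise (fun x _ => Finset.mem_univ (xv x))).symm
  have hQε : ∀ a, 0 < Q a + ε := fun a => by have := hQ0 a; linarith
  have hPbarpos : ∀ a, 0 < Pbar a := fun a => by
    rw [hPbar a]; exact div_pos (hQε a) hs
  have hPbars : ∀ a, Pbar a * s = Q a + ε := fun a => by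
    rw [hPbar a]; field_simp
  -- P a ≤ Q a + ε
  have hPQ : ∀ a, P a ≤ Q a + ε := by
    intro a
    have h0 : ∑ x, (P x - Q x) = 0 := by
      rw [Finset.sum_sub_distrib, hP1, hQ1]; ring
    have hsplit : ∑ x, |P x - Q x| = |P a - Q a| + ∑ x ∈ Finset.univ.erase a, |P x - Q x| := by
      rw [← Finset.add_sum_erase _ _ (Finset.mem_univ a)]
    have h0' : P a - Q a = -∑ x ∈ Finset.univ.erase a, (P x - Q x) := by
      have h4 := h0
      rw [← Finset.add_sum_erase _ (fun x => P x - Q x) (Finset.mem_univ a)] at h4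
      linarith
    have h2 : P a - Q a ≤ ∑ x ∈ Finset.univ.erase a, |P x - Q x| := by
      rw [h0']
      calc -∑ x ∈ Finset.univ.erase a, (P x - Q x)
          ≤ |∑ x ∈ Finset.univ.erase a, (P x - Q x)| := neg_le_abs _
        _ ≤ ∑ x ∈ Finset.univ.erase a, |P x - Q x| := Finset.abs_sum_le_sum_abs _ _
    have h3 : P a - Q a ≤ |P a - Q a| := le_abs_self _
    have : 2 * (P a - Q a) ≤ ∑ x, |P x - Q x| := by rw [hsplit]; linarith
    linarith [hV]
  have hT : ∀ a, typeOf xv a = (N a : ℝ) / n := fun a => rfl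
  have hT0 : ∀ a, 0 ≤ typeOf xv a := fun a => by
    rw [hT a]; positivity
  have hHD : Hent (typeOf xv) + KL (typeOf xv) Pbar
      = -∑ a, typeOf xv a * Real.logb 2 (Pbar a) := by
    rw [Hent, KL, neg_add_eq_sub, ← Finset.sum_sub_distrib, ← Finset.sum_neg_distrib]
    apply Finset.sum_congr rfl
    intro a _
    rcases eq_or_lt_of_le (hT0 a) with h | h
    · rw [← h]; ring
    · rw [Real.logb_div (ne_of_gt h) (ne_of_gt (hPbarpos a))]; ring
  have hn' : (n:ℝ) ≠ 0 := Nat.cast_ne_zero.mpr hn.ne'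
  have hexp : -(n:ℝ) * (Hent (typeOf xv) + KL (typeOf xv) Pbar - Real.logb 2 s)
      = (∑ a, Real.logb 2 (Pbar a) * (N a : ℕ)) + Real.logb 2 s * (n : ℕ) := by
    have e : ∀ a ∈ Finset.univ, Real.logb 2 (Pbar a) * ((N a : ℕ) : ℝ)
        = (n:ℝ) * (typeOf xv a * Real.logb 2 (Pbar a)) := by
      intro a _
      rw [hT a]; field_simp
    rw [hHD, Finset.sum_congr rfl e, ← Finset.mul_sum]
    ring
  rw [hexp]
  have h2pos : (0:ℝ) < 2 := two_pos
  have h2ne : (2:ℝ) ≠ 1 := by norm_num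
  have hrhs : (2:ℝ) ^ ((∑ a, Real.logb 2 (Pbar a) * (N a : ℕ)) + Real.logb 2 s * (n : ℕ))
      = ∏ a, (Q a + ε) ^ N a := by
    rw [Real.rpow_add h2pos, Real.rpow_sum_of_pos h2pos]
    have e1 : ∀ a ∈ Finset.univ, (2:ℝ) ^ (Real.logb 2 (Pbar a) * (N a : ℕ))
        = (Pbar a) ^ N a := by
      intro a _
      rw [Real.rpow_mul_natCast (le_of_lt h2pos), Real.rpow_logb h2pos h2ne (hPbarpos a)]
    rw [Finset.prod_congr rfl e1,
      Real.rpow_mul_natCast (le_of_lt h2pos), Real.rpow_logb h2pos h2ne hs,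
      ← hNsum, ← Finset.prod_pow_eq_pow_sum, ← Finset.prod_mul_distrib]
    exact Finset.prod_congr rfl fun a _ => by rw [← mul_pow, hPbars a]
  rw [hrhs]
  calc ∏ i, P (xv i) ≤ ∏ i, (Q (xv i) + ε) :=
        Finset.prod_le_prod (fun i _ => hP0 _) (fun i _ => hPQ _)
    _ = ∏ a, (Q a + ε) ^ N a := by
        rw [← Finset.prod_fiberwise_of_maps_to (g := xv) (fun i _ => Finset.mem_univ (xv i))
          (fun i => Q (xv i) + ε)]
        refine Finset.prod_congr rfl fun a _ => ?_
        rw [show (Q a + ε) ^ N a = ∏ _i ∈ Finset.univ.filter (fun i => xv i = a), (Q a + ε) by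
          rw [Finset.prod_const]]
        exact Finset.prod_congr rfl fun i hi => by
          rw [(Finset.mem_filter.mp hi).2]
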